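/- Let f, g and h be entire functions given by everywhere absolutely convergent vector valued Dirichlet series, and let p ≥ 0, q ≥ 0, m ≥ 0 be integers. Assume 0 < λ_h^{(m,q)}(f) ≤ ρ_h^{(m,q)}(f) < +∞ and 0 < λ_h^{(m,p)}(g) ≤ ρ_h^{(m,p)}(g) < +∞. Then λ_g^{(p,q)}(f) · λ_f^{(q,p)}(g) ≤ 1. Moreover, if f is of regular relative (m,q) Ritt growth with respect to h and g is of regular relative (m,p) Ritt growth with respect to h, then λ_g^{(p,q)}(f) · λ_f^{(q,p)}(g) = 1. -/

import Mathlib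

open Filter Topology

noncomputable section

/-- An entire function given by an everywhere absolutely convergent
vector valued Dirichlet series, with coefficients in a Banach space `E`. -/
structure VVDS (E : Type*) [NormedAddCommGroup E] [NormedSpace ℂ E] [CompleteSpace E] where
  a : ℕ → E
  lam : ℕ → ℝ
  lam_pos : ∀ n, 0 < lam n
  lam_strictMono : StrictMono lam
  lam_tendsto : Tendsto lam atTop atTop
  log_index_bound : ∃ D : ℝ, ∀ᶠ n : ℕ in atTop, Real.log (n : ℝ) / lam n ≤ D
  coeff_decay : Tendsto (fun n => Real.log ‖a n‖ / lam n) atTop atBot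
  abs_conv : ∀ s : ℂ, Summable (fun n => Real.exp (s.re * lam n) * ‖a n‖)

variable {E F G : Type*} [NormedAddCommGroup E] [NormedSpace ℂ E] [CompleteSpace E]
  [NormedAddCommGroup F] [NormedSpace ℂ F] [CompleteSpace F]
  [NormedAddCommGroup G] [NormedSpace ℂ G] [CompleteSpace G]

/-- The entire function defined by the vector valued Dirichlet series. -/
def VVDS.toFun (f : VVDS E) (s : ℂ) : E := ∑' n, Complex.exp (s * (f.lam n : ℂ)) • f.a n

/-- The maximum modulus function `M_f(σ) = sup_t ‖f(σ+it)‖`. -/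
def VVDS.M (f : VVDS E) (σ : ℝ) : ℝ := ⨆ t : ℝ, ‖f.toFun ((σ : ℂ) + (t : ℂ) * Complex.I)‖

/-- The inverse function of the maximum modulus function. -/
def VVDS.Minv (f : VVDS E) (y : ℝ) : ℝ := sInf {σ : ℝ | y ≤ f.M σ}

/-- The (p,q)-th relative Ritt order of `f` with respect to `g`. -/
def relRittOrder (p q : ℕ) (f : VVDS E) (g : VVDS F) : EReal :=
  limsup (fun σ : ℝ =>
    ((Real.log^[p] (g.Minv (f.M σ)) / Real.log^[q] σ : ℝ) : EReal)) atTop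

/-- The (p,q)-th relative Ritt lower order of `f` with respect to `g`. -/
def relRittLowerOrder (p q : ℕ) (f : VVDS E) (g : VVDS F) : EReal :=
  liminf (fun σ : ℝ =>
    ((Real.log^[p] (g.Minv (f.M σ)) / Real.log^[q] σ : ℝ) : EReal)) atTop

/-- The (p,q)-th relative Ritt type of `f` with respect to `g`. -/
def relRittType (p q : ℕ) (f : VVDS E) (g : VVDS F) : EReal :=
  limsup (fun σ : ℝ =>
    ((Real.log^[p-1] (g.Minv (f.M σ)) /
      (Real.log^[q-1] σ) ^ (relRittOrder p q f g).toReal : ℝ) : EReal)) atTop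

/-- The (p,q)-th relative Ritt lower type of `f` with respect to `g`. -/
def relRittLowerType (p q : ℕ) (f : VVDS E) (g : VVDS F) : EReal :=
  liminf (fun σ : ℝ =>
    ((Real.log^[p-1] (g.Minv (f.M σ)) /
      (Real.log^[q-1] σ) ^ (relRittOrder p q f g).toReal : ℝ) : EReal)) atTop

/-- The (p,q)-th relative Ritt weak type of `f` with respect to `g`. -/
def relRittWeakType (p q : ℕ) (f : VVDS E) (g : VVDS F) : EReal :=
  liminf (fun σ : ℝ =>
    ((Real.log^[p-1] (g.Minv (f.M σ)) /
      (Real.log^[q-1] σ) ^ (relRittLowerOrder p q f g).toReal : ℝ) : EReal)) atTop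

/-- The growth indicator `τ̄_g^{(p,q)}(f)`. -/
def relRittUpperWeakType (p q : ℕ) (f : VVDS E) (g : VVDS F) : EReal :=
  limsup (fun σ : ℝ =>
    ((Real.log^[p-1] (g.Minv (f.M σ)) /
      (Real.log^[q-1] σ) ^ (relRittLowerOrder p q f g).toReal : ℝ) : EReal)) atTop

/-!
Through the third function `h`: whenever `M_g(τ) ≥ M_f(σ)`, monotonicity of `M_h⁻¹` gives
`M_h⁻¹(M_f σ) ≤ M_h⁻¹(M_g τ)`, and the reverse for `M_g(τ) < M_f(σ)`. Taking `τ` next to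
`M_g⁻¹(M_f σ)` and comparing `log^[m] M_h⁻¹(M_f σ)` with `log^[q] σ` and `log^[m] M_h⁻¹(M_g τ)`
with `log^[p] τ` yields
`λ_h^{(m,q)}(f) / ρ_h^{(m,p)}(g) ≤ λ_g^{(p,q)}(f) ≤ λ_h^{(m,q)}(f) / λ_h^{(m,p)}(g)`,
and symmetrically for `λ_f^{(q,p)}(g)`. The product of the two upper bounds is `1`; under regular
growth the lower and upper bounds coincide. That every `M_f` tends to `+∞`, so that the inverses
behave, is Bohr's coefficient estimate `e^{σλ_N} ‖a_N‖ ≤ M_f(σ)`.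
-/

section MeanValue

open Complex MeasureTheory

lemma norm_exp_ofReal_mul_I_mul (ν t : ℝ) : ‖cexp (ν * I * t)‖ = 1 := by
  rw [show (ν : ℂ) * I * t = ((ν * t : ℝ) : ℂ) * I by push_cast; ring, norm_exp_ofReal_mul_I]

lemma norm_inv_smul_intervalIntegral_le {V : Type*} [NormedAddCommGroup V] [NormedSpace ℂ V]
    {φ : ℝ → V} {C T : ℝ} (hT : 0 < T)
    (hφ : ∀ t, ‖φ t‖ ≤ C) : ‖(T : ℂ)⁻¹ • ∫ t in (0 : ℝ)..T, φ t‖ ≤ C := by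
  have hint := intervalIntegral.norm_integral_le_of_norm_le_const (a := 0) (b := T)
    fun t _ => hφ t
  rw [sub_zero, abs_of_pos hT] at hint
  rw [norm_smul, norm_inv, norm_real, Real.norm_eq_abs, abs_of_pos hT]
  calc T⁻¹ * ‖∫ t in (0 : ℝ)..T, φ t‖ ≤ T⁻¹ * (C * T) := by gcongr
    _ = C := by field_simp

lemma norm_intervalIntegral_exp_mul_I_le {ν : ℝ} (hν : ν ≠ 0) (T : ℝ) :
    ‖∫ t in (0 : ℝ)..T, cexp (ν * I * t)‖ ≤ 2 / |ν| := by
  have hc : (ν : ℂ) * I ≠ 0 := mul_ne_zero (ofReal_ne_zero.mpr hν) I_ne_zero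
  rw [integral_exp_mul_complex hc, norm_div, norm_mul, norm_I, mul_one, norm_real,
    Real.norm_eq_abs]
  gcongr
  calc ‖cexp (ν * I * T) - cexp (ν * I * (0 : ℝ))‖
      ≤ ‖cexp (ν * I * T)‖ + ‖cexp (ν * I * (0 : ℝ))‖ := norm_sub_le _ _
    _ = 2 := by rw [norm_exp_ofReal_mul_I_mul, norm_exp_ofReal_mul_I_mul]; norm_num

lemma tendsto_inv_smul_intervalIntegral_exp_mul_I {ν : ℝ} (hν : ν ≠ 0) :
    Tendsto (fun T : ℝ => (T : ℂ)⁻¹ • ∫ t in (0 : ℝ)..T, cexp (ν * I * t)) atTop (𝓝 0) := by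
  refine squeeze_zero_norm' ?_ ((tendsto_inv_atTop_zero.mul_const (2 / |ν|)).trans (by simp))
  filter_upwards [eventually_gt_atTop 0] with T hT
  rw [norm_smul, norm_inv, norm_real, Real.norm_eq_abs, abs_of_pos hT]
  gcongr
  exact norm_intervalIntegral_exp_mul_I_le hν T

lemma intervalIntegral_tsum_exp_mul_I_smul {ι : Type*} [Countable ι] {c : ι → E}
    (hc : Summable fun n => ‖c n‖) (ν : ι → ℝ) (T : ℝ) :
    ∫ t in (0 : ℝ)..T, ∑' n, cexp (ν n * I * t) • c n =
      ∑' n, (∫ t in (0 : ℝ)..T, cexp (ν n * I * t)) • c n := by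
  have hnorm (n : ι) (t : ℝ) : ‖cexp (ν n * I * t) • c n‖ = ‖c n‖ := by
    rw [norm_smul, norm_exp_ofReal_mul_I_mul, one_mul]
  have hsum := intervalIntegral.hasSum_integral_of_dominated_convergence (a := 0) (b := T)
    (μ := volume) (F := fun n t => cexp (ν n * I * t) • c n) (fun n _ => ‖c n‖)
    (fun n => (Continuous.aestronglyMeasurable (by fun_prop)))
    (fun n => ae_of_all _ fun t _ => (hnorm n t).le) (ae_of_all _ fun _ _ => hc)
    intervalIntegrable_const
    (ae_of_all _ fun t _ => (hc.congr fun n => (hnorm n t).symm).of_norm.hasSum)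
  simpa only [intervalIntegral.integral_smul_const] using hsum.tsum_eq.symm

lemma tendsto_tsum_inv_smul_intervalIntegral_exp_mul_I_smul {ι : Type*} {c : ι → E} {μ : ι → ℝ}
    (hμ : Function.Injective μ) (hc : Summable fun n => ‖c n‖) (N : ι) :
    Tendsto (fun T : ℝ => ∑' n,
      ((T : ℂ)⁻¹ • ∫ t in (0 : ℝ)..T, cexp (((μ n - μ N : ℝ) : ℂ) * I * t)) • c n)
      atTop (𝓝 (c N)) := by
  classical
  rw [← tsum_ite_eq N c]
  refine tendsto_tsum_of_dominated_convergence hc (fun n => ?_) ?_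
  · by_cases hn : n = N
    · subst hn
      refine tendsto_const_nhds.congr' ?_
      filter_upwards [eventually_ne_atTop 0] with T hT
      simp [hT]
    · simpa only [hn, if_false, zero_smul] using
        (tendsto_inv_smul_intervalIntegral_exp_mul_I (sub_ne_zero.mpr (hμ.ne hn))).smul_const (c n)
  · filter_upwards [eventually_gt_atTop 0] with T hT n
    rw [norm_smul]
    exact mul_le_of_le_one_left (norm_nonneg _)
      (norm_inv_smul_intervalIntegral_le hT fun t => (norm_exp_ofReal_mul_I_mul _ t).le)

/-- Bohr's mean value argument: the averages of `exp (-i μ_N t) F(t)` over `[0, T]` are bounded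
by `M` and tend to `c N`. -/
theorem norm_le_of_forall_norm_tsum_exp_mul_I_smul_le {ι : Type*} [Countable ι] {c : ι → E}
    {μ : ι → ℝ} (hμ : Function.Injective μ)
    (hc : Summable fun n => ‖c n‖) {M : ℝ} (hM : ∀ t : ℝ, ‖∑' n, cexp (μ n * I * t) • c n‖ ≤ M)
    (N : ι) : ‖c N‖ ≤ M := by
  have htwist (t : ℝ) : cexp (((-μ N : ℝ) : ℂ) * I * t) • ∑' n, cexp (μ n * I * t) • c n =
      ∑' n, cexp (((μ n - μ N : ℝ) : ℂ) * I * t) • c n := by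
    rw [← tsum_const_smul'']
    congr 1 with n
    rw [smul_smul, ← Complex.exp_add]
    push_cast
    ring_nf
  refine le_of_tendsto (tendsto_tsum_inv_smul_intervalIntegral_exp_mul_I_smul hμ hc N).norm ?_
  filter_upwards [eventually_gt_atTop 0] with T hT
  have hmean : ∑' n, ((T : ℂ)⁻¹ • ∫ t in (0 : ℝ)..T, cexp (((μ n - μ N : ℝ) : ℂ) * I * t)) • c n =
      (T : ℂ)⁻¹ • ∫ t in (0 : ℝ)..T,
        cexp (((-μ N : ℝ) : ℂ) * I * t) • ∑' n, cexp (μ n * I * t) • c n := by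
    simp only [smul_assoc, tsum_const_smul'', htwist, intervalIntegral_tsum_exp_mul_I_smul hc]
  rw [hmean]
  refine norm_inv_smul_intervalIntegral_le hT fun t => ?_
  rw [norm_smul, norm_exp_ofReal_mul_I_mul, one_mul]
  exact hM t

end MeanValue

namespace VVDS

open Complex

variable (f : VVDS E)

/-- Monotonicity of `M` would need a maximum principle; this monotone majorant of `M` suffices to
bound the sets `{σ | y ≤ M σ}` below, which is all that `Minv = sInf` needs. -/
def majorant (σ : ℝ) : ℝ := ∑' n, Real.exp (σ * f.lam n) * ‖f.a n‖

lemma summable_majorant (σ : ℝ) : Summable fun n => Real.exp (σ * f.lam n) * ‖f.a n‖ := by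
  simpa using f.abs_conv σ

lemma majorant_mono : Monotone f.majorant := fun σ τ hστ =>
  (f.summable_majorant σ).tsum_le_tsum (fun n => by have := (f.lam_pos n).le; gcongr)
    (f.summable_majorant τ)

lemma norm_exp_mul_smul (s : ℂ) (n : ℕ) :
    ‖cexp (s * f.lam n) • f.a n‖ = Real.exp (s.re * f.lam n) * ‖f.a n‖ := by
  rw [norm_smul, Complex.norm_exp, re_mul_ofReal]

lemma norm_toFun_le (s : ℂ) : ‖f.toFun s‖ ≤ f.majorant s.re := by
  simp only [toFun, majorant, ← norm_exp_mul_smul]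
  exact norm_tsum_le_tsum_norm ((f.abs_conv s).congr fun n => (f.norm_exp_mul_smul s n).symm)

lemma bddAbove_range_norm_toFun (σ : ℝ) :
    BddAbove (Set.range fun t : ℝ => ‖f.toFun (σ + t * I)‖) :=
  ⟨f.majorant σ, by rintro _ ⟨t, rfl⟩; simpa using f.norm_toFun_le (σ + t * I)⟩

lemma norm_toFun_le_M (σ t : ℝ) : ‖f.toFun (σ + t * I)‖ ≤ f.M σ :=
  le_ciSup (f.bddAbove_range_norm_toFun σ) t

lemma M_le_majorant (σ : ℝ) : f.M σ ≤ f.majorant σ :=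
  ciSup_le fun t => by simpa using f.norm_toFun_le (σ + t * I)

lemma toFun_eq_tsum (σ t : ℝ) :
    f.toFun (σ + t * I) = ∑' n, cexp (f.lam n * I * t) • (cexp (σ * f.lam n) • f.a n) := by
  refine tsum_congr fun n => ?_
  rw [smul_smul, ← Complex.exp_add]
  ring_nf

lemma exp_mul_norm_le_M (N : ℕ) (σ : ℝ) : Real.exp (σ * f.lam N) * ‖f.a N‖ ≤ f.M σ := by
  have hsum : Summable fun n => ‖cexp (σ * f.lam n) • f.a n‖ := by
    simpa only [norm_exp_mul_smul, ofReal_re] using f.summable_majorant σ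
  have := norm_le_of_forall_norm_tsum_exp_mul_I_smul_le f.lam_strictMono.injective hsum
    (fun t => (f.toFun_eq_tsum σ t ▸ f.norm_toFun_le_M σ t)) N
  rwa [norm_exp_mul_smul, ofReal_re] at this

lemma exists_coeff_ne_zero : ∃ N, f.a N ≠ 0 := by
  obtain ⟨N, hN⟩ := (f.coeff_decay.eventually_le_atBot (-1)).exists
  -- a zero coefficient would give `log 0 / λ = 0 ≤ -1`
  exact ⟨N, fun h0 => by norm_num [h0] at hN⟩

lemma tendsto_M : Tendsto f.M atTop atTop := by
  obtain ⟨N, hN⟩ := f.exists_coeff_ne_zero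
  refine tendsto_atTop_mono (f.exp_mul_norm_le_M N) ?_
  exact (Real.tendsto_exp_atTop.comp (tendsto_id.atTop_mul_const (f.lam_pos N))).atTop_mul_const
    (norm_pos_iff.mpr hN)

lemma tendsto_majorant_atBot : Tendsto f.majorant atBot (𝓝 0) := by
  have hlim : ∀ n, Tendsto (fun σ => Real.exp (σ * f.lam n) * ‖f.a n‖) atBot (𝓝 0) := fun n => by
    simpa using (Real.tendsto_exp_atBot.comp
      (tendsto_id.atBot_mul_const (f.lam_pos n))).mul_const ‖f.a n‖
  have hbound : ∀ᶠ σ in atBot, ∀ n,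
      ‖Real.exp (σ * f.lam n) * ‖f.a n‖‖ ≤ Real.exp (0 * f.lam n) * ‖f.a n‖ := by
    filter_upwards [eventually_le_atBot 0] with σ hσ n
    rw [Real.norm_of_nonneg (by positivity)]
    have := (f.lam_pos n).le
    gcongr
  have h := tendsto_tsum_of_dominated_convergence (f.summable_majorant 0) hlim hbound
  rwa [tsum_zero] at h

variable {f}

lemma le_of_le_M {y T σ : ℝ} (hy : f.majorant T < y) (hσ : y ≤ f.M σ) : T ≤ σ := by
  by_contra! hσT
  exact (hσ.trans ((f.M_le_majorant σ).trans (f.majorant_mono hσT.le))).not_gt hy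

lemma le_Minv {y T : ℝ} (hy : f.majorant T < y) : T ≤ f.Minv y :=
  le_csInf ((f.tendsto_M.eventually_ge_atTop y).exists) fun _ => le_of_le_M hy

lemma bddBelow_setOf_le_M {y : ℝ} (hy : 0 < y) : BddBelow {σ | y ≤ f.M σ} := by
  obtain ⟨T, hT⟩ := (f.tendsto_majorant_atBot.eventually_lt_const hy).exists
  exact ⟨T, fun _ => le_of_le_M hT⟩

lemma Minv_mono {y z : ℝ} (hy : 0 < y) (hyz : y ≤ z) : f.Minv y ≤ f.Minv z :=
  csInf_le_csInf (bddBelow_setOf_le_M hy) ((f.tendsto_M.eventually_ge_atTop z).exists)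
    fun _ hσ => hyz.trans hσ

lemma M_lt_of_lt_Minv {y τ : ℝ} (hy : 0 < y) (hτ : τ < f.Minv y) : f.M τ < y :=
  not_le.mp fun hτy => (csInf_le (bddBelow_setOf_le_M hy) hτy).not_gt hτ

lemma exists_le_M_lt_Minv_add_one {y : ℝ} (hy : 0 < y) :
    ∃ τ, y ≤ f.M τ ∧ τ < f.Minv y + 1 :=
  (csInf_lt_iff (bddBelow_setOf_le_M hy) ((f.tendsto_M.eventually_ge_atTop y).exists)).mp
    (lt_add_one _)

end VVDS

lemma tendsto_Minv_M (f : VVDS E) (g : VVDS F) :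
    Tendsto (fun σ => g.Minv (f.M σ)) atTop atTop :=
  tendsto_atTop.mpr fun T => (f.tendsto_M.eventually_gt_atTop (g.majorant T)).mono
    fun _ => VVDS.le_Minv

namespace Real

lemma one_le_exp_iterate (k : ℕ) : 1 ≤ exp^[k] 1 := by
  induction k with
  | zero => rfl
  | succ k ih =>
    rw [Function.iterate_succ_apply']
    exact one_le_exp (by linarith)

lemma exp_iterate_le_log {k : ℕ} {x : ℝ} (hx : exp^[k + 1] 1 ≤ x) : exp^[k] 1 ≤ log x := by
  rw [Function.iterate_succ_apply'] at hx
  exact (le_log_iff_exp_le (by linarith [one_le_exp_iterate k, exp_pos (exp^[k] 1)])).mpr hx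

lemma log_iterate_le_log_iterate {k : ℕ} {a b : ℝ} (ha : exp^[k] 1 ≤ a) (hab : a ≤ b) :
    log^[k] a ≤ log^[k] b := by
  induction k generalizing a b with
  | zero => exact hab
  | succ k ih =>
    have ha_pos : 0 < a := by linarith [one_le_exp_iterate (k + 1)]
    exact ih (exp_iterate_le_log ha) (log_le_log ha_pos hab)

lemma log_add_one_le {x : ℝ} (hx : 1 ≤ x) : log (x + 1) ≤ log x + 1 := by
  rw [log_le_iff_le_exp (by linarith), exp_add, exp_log (by linarith)]
  nlinarith [add_one_le_exp (1 : ℝ)]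

lemma log_iterate_add_one_le {k : ℕ} {x : ℝ} (hx : exp^[k] 1 ≤ x) :
    log^[k] (x + 1) ≤ log^[k] x + 1 := by
  induction k generalizing x with
  | zero => rfl
  | succ k ih =>
    have hlog := exp_iterate_le_log hx
    have hx1 : 1 ≤ x := (one_le_exp_iterate (k + 1)).trans hx
    calc log^[k] (log (x + 1)) ≤ log^[k] (log x + 1) :=
          log_iterate_le_log_iterate (hlog.trans (log_le_log (by linarith) (by linarith)))
            (log_add_one_le hx1)
      _ ≤ log^[k] (log x) + 1 := ih hlog

end Real

lemma EReal.exists_eq_coe_of_coe_le_of_le_coe {x : EReal} {a b : ℝ} (ha : (a : EReal) ≤ x)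
    (hb : x ≤ b) : ∃ r : ℝ, x = r :=
  ⟨x.toReal, (EReal.coe_toReal (hb.trans_lt (EReal.coe_lt_top b)).ne
    ((EReal.bot_lt_coe a).trans_le ha).ne').symm⟩

section RatioLiminf

variable {α : Type*} {l : Filter α} {u v : α → ℝ}

lemma eventually_mul_le_of_lt_liminf {a : ℝ} (hv : ∀ᶠ x in l, 0 < v x)
    (h : (a : EReal) < liminf (fun x => ((u x / v x : ℝ) : EReal)) l) :
    ∀ᶠ x in l, a * v x ≤ u x := by
  filter_upwards [eventually_lt_of_lt_liminf h, hv] with x hx hvx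
  exact ((lt_div_iff₀ hvx).mp (EReal.coe_lt_coe_iff.mp hx)).le

lemma eventually_le_mul_of_limsup_lt {b : ℝ} (hv : ∀ᶠ x in l, 0 < v x)
    (h : limsup (fun x => ((u x / v x : ℝ) : EReal)) l < b) :
    ∀ᶠ x in l, u x ≤ b * v x := by
  filter_upwards [eventually_lt_of_limsup_lt h, hv] with x hx hvx
  exact ((div_lt_iff₀ hvx).mp (EReal.coe_lt_coe_iff.mp hx)).le

lemma frequently_le_mul_of_liminf_lt {a : ℝ} (hv : ∀ᶠ x in l, 0 < v x)
    (h : liminf (fun x => ((u x / v x : ℝ) : EReal)) l < a) :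
    ∃ᶠ x in l, u x ≤ a * v x := by
  refine ((frequently_lt_of_liminf_lt (by isBoundedDefault) h).and_eventually hv).mono ?_
  rintro x ⟨hx, hvx⟩
  exact ((div_lt_iff₀ hvx).mp (EReal.coe_lt_coe_iff.mp hx)).le

variable [l.NeBot]

lemma coe_div_le_liminf_of_eventually_mul_le {a b : ℝ} (hb : 0 < b) (hv : Tendsto v l atTop)
    (h : ∀ᶠ x in l, a * v x ≤ b * (u x + 1)) :
    ((a / b : ℝ) : EReal) ≤ liminf (fun x => ((u x / v x : ℝ) : EReal)) l := by
  have hlim : Tendsto (fun x => ((a / b - (v x)⁻¹ : ℝ) : EReal)) l (𝓝 ((a / b : ℝ) : EReal)) :=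
    (continuous_coe_real_ereal.tendsto _).comp
      (by simpa using tendsto_const_nhds.sub (tendsto_inv_atTop_zero.comp hv))
  rw [← hlim.liminf_eq]
  refine liminf_le_liminf ?_
  filter_upwards [h, hv.eventually_gt_atTop 0] with x hx hvx
  refine EReal.coe_le_coe_iff.mpr ?_
  calc a / b - (v x)⁻¹ = (a * v x / b - 1) / v x := by field_simp
    _ ≤ u x / v x := by
      gcongr
      rw [sub_le_iff_le_add, div_le_iff₀ hb]
      linarith

lemma liminf_le_coe_div_of_frequently_le_mul {a b : ℝ} (hb : 0 < b) (hv : Tendsto v l atTop)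
    (h : ∃ᶠ x in l, b * (u x - 1) ≤ a * v x) :
    liminf (fun x => ((u x / v x : ℝ) : EReal)) l ≤ ((a / b : ℝ) : EReal) := by
  have hlim : Tendsto (fun x => ((a / b + (v x)⁻¹ : ℝ) : EReal)) l (𝓝 ((a / b : ℝ) : EReal)) :=
    (continuous_coe_real_ereal.tendsto _).comp
      (by simpa using tendsto_const_nhds.add (tendsto_inv_atTop_zero.comp hv))
  rw [← hlim.limsup_eq]
  refine liminf_le_limsup_of_frequently_le ((h.and_eventually (hv.eventually_gt_atTop 0)).mono ?_)
  rintro x ⟨hx, hvx⟩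
  refine EReal.coe_le_coe_iff.mpr ?_
  calc u x / v x ≤ (a * v x / b + 1) / v x := by
        gcongr
        rw [← sub_le_iff_le_add, le_div_iff₀ hb]
        linarith
    _ = a / b + (v x)⁻¹ := by field_simp

end RatioLiminf

section Comparison

open Real

variable (f : VVDS E) (g : VVDS F) (h : VVDS G) (p q m : ℕ)

lemma eventually_mul_log_iterate_le_of_eventually {a b : ℝ} (hb : 0 ≤ b)
    (hf : ∀ᶠ σ in atTop, a * log^[q] σ ≤ log^[m] (h.Minv (f.M σ)))
    (hg : ∀ᶠ τ in atTop, log^[m] (h.Minv (g.M τ)) ≤ b * log^[p] τ) :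
    ∀ᶠ σ in atTop, a * log^[q] σ ≤ b * (log^[p] (g.Minv (f.M σ)) + 1) := by
  obtain ⟨R, hR⟩ := eventually_atTop.mp hg
  filter_upwards [hf, f.tendsto_M.eventually_gt_atTop (g.majorant (max R (exp^[p] 1))),
    f.tendsto_M.eventually_gt_atTop 0, (tendsto_Minv_M f h).eventually_ge_atTop (exp^[m] 1),
    (tendsto_Minv_M f g).eventually_ge_atTop (exp^[p] 1)] with σ hfσ hMR hM0 hhm hgp
  -- `Minv` is an infimum that need not be attained; a slack of `1` is absorbed by `log^[p]`
  obtain ⟨τ, hτM, hτ⟩ := g.exists_le_M_lt_Minv_add_one hM0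
  have hRτ : max R (exp^[p] 1) ≤ τ := VVDS.le_of_le_M hMR hτM
  calc a * log^[q] σ ≤ log^[m] (h.Minv (f.M σ)) := hfσ
    _ ≤ log^[m] (h.Minv (g.M τ)) := log_iterate_le_log_iterate hhm (VVDS.Minv_mono hM0 hτM)
    _ ≤ b * log^[p] τ := hR τ (le_of_max_le_left hRτ)
    _ ≤ b * log^[p] (g.Minv (f.M σ) + 1) :=
      mul_le_mul_of_nonneg_left (log_iterate_le_log_iterate (le_of_max_le_right hRτ) hτ.le) hb
    _ ≤ b * (log^[p] (g.Minv (f.M σ)) + 1) :=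
      mul_le_mul_of_nonneg_left (log_iterate_add_one_le hgp) hb

lemma frequently_mul_log_iterate_le_of_frequently {a b : ℝ} (hb : 0 ≤ b)
    (hf : ∃ᶠ σ in atTop, log^[m] (h.Minv (f.M σ)) ≤ a * log^[q] σ)
    (hg : ∀ᶠ τ in atTop, b * log^[p] τ ≤ log^[m] (h.Minv (g.M τ))) :
    ∃ᶠ σ in atTop, b * (log^[p] (g.Minv (f.M σ)) - 1) ≤ a * log^[q] σ := by
  obtain ⟨R, hR⟩ := eventually_atTop.mp hg
  have hτ : Tendsto (fun σ => g.Minv (f.M σ) - 1) atTop atTop :=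
    tendsto_atTop_add_const_right _ (-1) (tendsto_Minv_M f g)
  have hlarge : ∀ᶠ σ in atTop, 0 < f.M σ ∧ 0 < g.M (g.Minv (f.M σ) - 1) ∧
      exp^[m] 1 ≤ h.Minv (g.M (g.Minv (f.M σ) - 1)) ∧ R ≤ g.Minv (f.M σ) - 1 ∧
      exp^[p] 1 ≤ g.Minv (f.M σ) - 1 :=
    (f.tendsto_M.eventually_gt_atTop 0).and <| ((g.tendsto_M.comp hτ).eventually_gt_atTop 0).and <|
      (((tendsto_Minv_M g h).comp hτ).eventually_ge_atTop _).and <|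
      (hτ.eventually_ge_atTop R).and (hτ.eventually_ge_atTop _)
  refine (hf.and_eventually hlarge).mono ?_
  rintro σ ⟨hfσ, hM0, hgM0, hhm, hRτ, hgp⟩
  set τ := g.Minv (f.M σ) - 1
  have hgMτ : g.M τ < f.M σ := VVDS.M_lt_of_lt_Minv hM0 (sub_one_lt _)
  calc b * (log^[p] (g.Minv (f.M σ)) - 1) ≤ b * log^[p] τ := by
        refine mul_le_mul_of_nonneg_left ?_ hb
        have := log_iterate_add_one_le hgp
        rw [sub_add_cancel] at this
        linarith
    _ ≤ log^[m] (h.Minv (g.M τ)) := hR τ hRτ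
    _ ≤ log^[m] (h.Minv (f.M σ)) := log_iterate_le_log_iterate hhm (VVDS.Minv_mono hgM0 hgMτ.le)
    _ ≤ a * log^[q] σ := hfσ

end Comparison

section RelativeOrders

variable {f : VVDS E} {g : VVDS F} {h : VVDS G} {p q m : ℕ}

lemma eventually_log_iterate_pos (k : ℕ) : ∀ᶠ σ : ℝ in atTop, 0 < Real.log^[k] σ :=
  (Real.tendsto_log_atTop.iterate k).eventually_gt_atTop 0

lemma relRittLowerOrder_le_relRittOrder : relRittLowerOrder p q f g ≤ relRittOrder p q f g :=
  liminf_le_limsup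

lemma coe_div_le_relRittLowerOrder_of_lt {a b : ℝ} (hb : 0 < b)
    (ha : (a : EReal) < relRittLowerOrder m q f h) (hgb : relRittOrder m p g h < b) :
    ((a / b : ℝ) : EReal) ≤ relRittLowerOrder p q f g :=
  coe_div_le_liminf_of_eventually_mul_le hb (Real.tendsto_log_atTop.iterate q)
    (eventually_mul_log_iterate_le_of_eventually f g h p q m hb.le
      (eventually_mul_le_of_lt_liminf (eventually_log_iterate_pos q) ha)
      (eventually_le_mul_of_limsup_lt (eventually_log_iterate_pos p) hgb))

lemma relRittLowerOrder_le_coe_div_of_lt {a b : ℝ} (hb : 0 < b)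
    (ha : relRittLowerOrder m q f h < a) (hgb : (b : EReal) < relRittLowerOrder m p g h) :
    relRittLowerOrder p q f g ≤ ((a / b : ℝ) : EReal) :=
  liminf_le_coe_div_of_frequently_le_mul hb (Real.tendsto_log_atTop.iterate q)
    (frequently_mul_log_iterate_le_of_frequently f g h p q m hb.le
      (frequently_le_mul_of_liminf_lt (eventually_log_iterate_pos q) ha)
      (eventually_mul_le_of_lt_liminf (eventually_log_iterate_pos p) hgb))

lemma coe_div_le_relRittLowerOrder {x y : ℝ} (hy : 0 < y)
    (hx : (x : EReal) ≤ relRittLowerOrder m q f h) (hgy : relRittOrder m p g h ≤ y) :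
    ((x / y : ℝ) : EReal) ≤ relRittLowerOrder p q f g := by
  have hlim : Tendsto (fun δ : ℝ => (((x - δ) / (y + δ) : ℝ) : EReal)) (𝓝[>] 0)
      (𝓝 ((x / y : ℝ) : EReal)) := by
    refine (continuous_coe_real_ereal.tendsto _).comp (tendsto_nhdsWithin_of_tendsto_nhds ?_)
    have hc : ContinuousAt (fun δ : ℝ => (x - δ) / (y + δ)) 0 := by
      fun_prop (disch := simpa using hy.ne')
    simpa using hc.tendsto
  refine le_of_tendsto hlim ?_
  filter_upwards [self_mem_nhdsWithin] with δ (hδ : 0 < δ)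
  exact coe_div_le_relRittLowerOrder_of_lt (by linarith)
    (lt_of_lt_of_le (EReal.coe_lt_coe_iff.mpr (by linarith)) hx)
    (hgy.trans_lt (EReal.coe_lt_coe_iff.mpr (by linarith)))

lemma relRittLowerOrder_le_coe_div {x y : ℝ} (hy : 0 < y)
    (hx : relRittLowerOrder m q f h ≤ x) (hgy : (y : EReal) ≤ relRittLowerOrder m p g h) :
    relRittLowerOrder p q f g ≤ ((x / y : ℝ) : EReal) := by
  have hlim : Tendsto (fun δ : ℝ => (((x + δ) / (y - δ) : ℝ) : EReal)) (𝓝[>] 0)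
      (𝓝 ((x / y : ℝ) : EReal)) := by
    refine (continuous_coe_real_ereal.tendsto _).comp (tendsto_nhdsWithin_of_tendsto_nhds ?_)
    have hc : ContinuousAt (fun δ : ℝ => (x + δ) / (y - δ)) 0 := by
      fun_prop (disch := simpa using hy.ne')
    simpa using hc.tendsto
  refine ge_of_tendsto hlim ?_
  filter_upwards [Ioo_mem_nhdsGT hy] with δ hδ
  exact relRittLowerOrder_le_coe_div_of_lt (by linarith [hδ.2])
    (hx.trans_lt (EReal.coe_lt_coe_iff.mpr (by linarith [hδ.1])))
    (lt_of_lt_of_le (EReal.coe_lt_coe_iff.mpr (by linarith [hδ.1])) hgy)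

lemma exists_relRittLowerOrder_relRittOrder_eq_coe (hpos : 0 < relRittLowerOrder m q f h)
    (hfin : relRittOrder m q f h < ⊤) :
    ∃ L R : ℝ, 0 < L ∧ L ≤ R ∧ relRittLowerOrder m q f h = L ∧ relRittOrder m q f h = R := by
  have hle := relRittLowerOrder_le_relRittOrder (p := m) (q := q) (f := f) (g := h)
  lift relRittLowerOrder m q f h to ℝ using ⟨(hle.trans_lt hfin).ne, (bot_le.trans_lt hpos).ne'⟩
    with L hL
  lift relRittOrder m q f h to ℝ using ⟨hfin.ne, (bot_le.trans_lt (hpos.trans_le hle)).ne'⟩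
    with R hR
  exact ⟨L, R, by exact_mod_cast hpos, by exact_mod_cast hle, rfl, rfl⟩

end RelativeOrders

theorem stmt_6_general (f : VVDS E) (g : VVDS F) (h : VVDS G) (p q m : ℕ)
    (hf1 : (0 : EReal) < relRittLowerOrder m q f h)
    (hf3 : relRittOrder m q f h < ⊤)
    (hg1 : (0 : EReal) < relRittLowerOrder m p g h)
    (hg3 : relRittOrder m p g h < ⊤)
    :
    relRittLowerOrder p q f g * relRittLowerOrder q p g f ≤ 1 ∧ (relRittLowerOrder m q f h = relRittOrder m q f h → relRittLowerOrder m p g h = relRittOrder m p g h → relRittLowerOrder p q f g * relRittLowerOrder q p g f = 1) := by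
  obtain ⟨Lf, Rf, hLf0, hLfRf, hLf, hRf⟩ := exists_relRittLowerOrder_relRittOrder_eq_coe hf1 hf3
  obtain ⟨Lg, Rg, hLg0, hLgRg, hLg, hRg⟩ := exists_relRittLowerOrder_relRittOrder_eq_coe hg1 hg3
  have hP₁ : ((Lf / Rg : ℝ) : EReal) ≤ relRittLowerOrder p q f g :=
    coe_div_le_relRittLowerOrder (hLg0.trans_le hLgRg) hLf.ge hRg.le
  have hP₂ : relRittLowerOrder p q f g ≤ ((Lf / Lg : ℝ) : EReal) :=
    relRittLowerOrder_le_coe_div hLg0 hLf.le hLg.ge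
  have hQ₁ : ((Lg / Rf : ℝ) : EReal) ≤ relRittLowerOrder q p g f :=
    coe_div_le_relRittLowerOrder (hLf0.trans_le hLfRf) hLg.ge hRf.le
  have hQ₂ : relRittLowerOrder q p g f ≤ ((Lg / Lf : ℝ) : EReal) :=
    relRittLowerOrder_le_coe_div hLf0 hLg.le hLf.ge
  obtain ⟨P, hP⟩ := EReal.exists_eq_coe_of_coe_le_of_le_coe hP₁ hP₂
  obtain ⟨Q, hQ⟩ := EReal.exists_eq_coe_of_coe_le_of_le_coe hQ₁ hQ₂
  rw [hP] at hP₁ hP₂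
  rw [hQ] at hQ₁ hQ₂
  rw [hP, hQ, hLf, hRf, hLg, hRg]
  norm_cast at hP₁ hP₂ hQ₁ hQ₂ ⊢
  have hPQ : Lf / Lg * (Lg / Lf) = 1 := by field_simp
  refine ⟨?_, fun hf hg => ?_⟩
  · calc P * Q ≤ Lf / Lg * (Lg / Lf) :=
          mul_le_mul hP₂ hQ₂ ((div_pos hLg0 (hLf0.trans_le hLfRf)).le.trans hQ₁)
            (div_pos hLf0 hLg0).le
      _ = 1 := hPQ
  · subst hf hg
    rw [le_antisymm hP₂ hP₁, le_antisymm hQ₂ hQ₁, hPQ]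

theorem stmt_6 (f : VVDS E) (g : VVDS F) (h : VVDS G) (p q m : ℕ)
    (hf1 : (0 : EReal) < relRittLowerOrder m q f h)
    (hf2 : relRittLowerOrder m q f h ≤ relRittOrder m q f h)
    (hf3 : relRittOrder m q f h < ⊤)
    (hg1 : (0 : EReal) < relRittLowerOrder m p g h)
    (hg2 : relRittLowerOrder m p g h ≤ relRittOrder m p g h)
    (hg3 : relRittOrder m p g h < ⊤)
    :
    relRittLowerOrder p q f g * relRittLowerOrder q p g f ≤ 1 ∧ (relRittLowerOrder m q f h = relRittOrder m q f h → relRittLowerOrder m p g h = relRittOrder m p g h → relRittLowerOrder p q f g * relRittLowerOrder q p g f = 1) :=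
  stmt_6_general f g h p q m hf1 hf3 hg1 hg3
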